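/- Consider the dehomogenized inverse Gaussian coordinate functions in the chart $\lambda = 1$: $f_j(\mu,s) = s^{d-j}\mu^j p_{j-1}(1,\mu)$ for $j = 0, \ldots, d$ (with $p_{-1} := 1$). Every monomial appearing in $f_j$ has total degree at least $d$ in $(\mu, s)$, and the degree-$d$ parts of $f_0$ and $f_d$ are $s^d$ and $c\mu^d$ respectively for some nonzero constant $c$. Hence a generic linear combination $\sum a_j f_j$ has a zero of multiplicity exactly $d$ at $(\mu,s) = (0,0)$ whose tangent cone is not a union of lines through a single common direction shared by all the $f_j$. -/

import Mathlib

/-!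
Write `f_j = s^(d-j) μ^j q_j` with `q_0 = 1` and `q_j = p_{j-1}(1, μ)`. The three-term recurrence
gives `p_n(1, 0) = (2n-1)‼`, so every `q_j` has nonzero constant term. Hence `f_j` lies in the
`d`-th power of the ideal `(μ, s)`, and its degree-`d` part is the single monomial
`q_j(0) s^(d-j) μ^j`. In a combination `∑ a_j f_j` only `f_0` contributes to `s^d`, so that
coefficient is `a_0 ≠ 0`. A common tangent would be a linear form dividing both `s^d` and `μ^d`;
as `s` and `μ` are non-associated primes, such a divisor is a unit.
-/

noncomputable section

open MvPolynomial

/-- The homogenized Bessel polynomial `pₙ(λ, μ)` of degree `n`, with first variable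
`λ` and second variable `μ`. -/
def besselH2 : ℕ → MvPolynomial (Fin 2) ℂ
  | 0 => 1
  | 1 => X 0 + X 1
  | (n + 2) => C (2 * ((n : ℂ) + 2) - 1) * X 0 * besselH2 (n + 1) + (X 1) ^ 2 * besselH2 n

/-- The dehomogenized inverse Gaussian coordinate functions in the chart `λ = 1`,
in the variables `μ = X 0`, `s = X 1`:
`f_j(μ, s) = s^(d-j) μ^j p_{j-1}(1, μ)` (with `p₋₁ := 1`, so `f₀ = s^d`). -/
def igFl (d j : ℕ) : MvPolynomial (Fin 2) ℂ :=
  if j = 0 then X 1 ^ d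
  else X 1 ^ (d - j) * X 0 ^ j * aeval ![(1 : MvPolynomial (Fin 2) ℂ), X 0] (besselH2 (j - 1))

/-- Total degree of an exponent vector. -/
def totDeg (m : Fin 2 →₀ ℕ) : ℕ := m.sum fun _ e => e

namespace MvPolynomial

section CommSemiring

variable {σ R : Type*} [CommSemiring R]

theorem constantCoeff_aeval {τ : Type*} (g : σ → MvPolynomial τ R) (p : MvPolynomial σ R) :
    constantCoeff (aeval g p) = eval (fun i => constantCoeff (g i)) p := by
  rw [← eval_zero, aeval_eq_bind₁, eval, eval₂Hom_bind₁]
  rfl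

theorem coeff_monomial_mul_of_degree_eq [DecidableEq σ] {s m : σ →₀ ℕ} (a : R)
    (q : MvPolynomial σ R) (h : m.degree = s.degree) :
    coeff m (monomial s a * q) = if m = s then a * constantCoeff q else 0 := by
  rw [coeff_monomial_mul']
  by_cases hms : m = s
  · simp [hms, constantCoeff_eq]
  · rw [if_neg hms, if_neg]
    rintro hsm
    obtain ⟨t, rfl⟩ := le_iff_exists_add.mp hsm
    rw [map_add, add_eq_left, Finsupp.degree_eq_zero_iff] at h
    simp [h] at hms

theorem homogeneousComponent_monomial_mul (s : σ →₀ ℕ) (a : R) (q : MvPolynomial σ R) :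
    homogeneousComponent s.degree (monomial s a * q) = monomial s (a * constantCoeff q) := by
  classical
  ext m
  rw [coeff_homogeneousComponent, coeff_monomial]
  split_ifs with hdeg hsm hsm
  · rw [coeff_monomial_mul_of_degree_eq a q hdeg, if_pos hsm.symm]
  · rw [coeff_monomial_mul_of_degree_eq a q hdeg, if_neg (Ne.symm hsm)]
  · exact absurd (hsm ▸ rfl) hdeg
  · rfl

end CommSemiring

section CommRing

variable {σ R : Type*} [CommRing R]

theorem IsHomogeneous.not_isUnit [IsReduced R] {l : MvPolynomial σ R} {n : ℕ}
    (hl : l.IsHomogeneous n) (hn : n ≠ 0) (hl0 : l ≠ 0) : ¬IsUnit l := by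
  rw [isUnit_iff_totalDegree_of_isReduced, hl.totalDegree hl0]
  exact fun h => hn h.2

theorem isUnit_of_dvd_X_pow_of_dvd_X_pow [IsDomain R] {i j : σ} (hij : i ≠ j)
    {l : MvPolynomial σ R} {m n : ℕ} (hi : l ∣ X i ^ m) (hj : l ∣ X j ^ n) : IsUnit l := by
  obtain ⟨_ | k, -, hl⟩ := (dvd_prime_pow X_prime m).1 hi
  · exact associated_one_iff_isUnit.1 hl
  · have hXj : X i ∣ X j ^ n := (dvd_pow_self _ k.succ_ne_zero).trans (hl.symm.dvd.trans hj)
    exact absurd (X_dvd_X.1 (X_prime.dvd_of_dvd_pow hXj)) hij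

end CommRing

end MvPolynomial

open Nat in
theorem besselH2_eval_one_zero (n : ℕ) : eval ![1, 0] (besselH2 n) = ((2 * n - 1)‼ : ℂ) := by
  induction n using besselH2.induct with
  | case1 => simp [besselH2]
  | case2 => simp [besselH2]
  | case3 n ih _ =>
    rw [show 2 * (n + 1) - 1 = 2 * n + 1 by omega] at ih
    rw [besselH2, show 2 * (n + 2) - 1 = 2 * n + 1 + 2 by omega, doubleFactorial_add_two]
    simp only [map_add, map_mul, map_pow, eval_C, eval_X, Matrix.cons_val_zero,
      Matrix.cons_val_one, Matrix.cons_val_fin_one, ih]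
    push_cast
    ring

def igCofactor (j : ℕ) : MvPolynomial (Fin 2) ℂ :=
  if j = 0 then 1 else aeval ![(1 : MvPolynomial (Fin 2) ℂ), X 0] (besselH2 (j - 1))

theorem constantCoeff_igCofactor_ne_zero (j : ℕ) : constantCoeff (igCofactor j) ≠ 0 := by
  rw [igCofactor]
  split_ifs
  · simp
  · have hg : (fun i => constantCoeff (![(1 : MvPolynomial (Fin 2) ℂ), X 0] i)) = ![1, 0] := by
      funext i
      fin_cases i <;> simp
    rw [constantCoeff_aeval, hg, besselH2_eval_one_zero]
    exact Nat.cast_ne_zero.2 (Nat.doubleFactorial_pos _).ne'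

theorem igFl_eq_monomial_mul (d j : ℕ) :
    igFl d j = monomial (Finsupp.single 1 (d - j) + Finsupp.single 0 j) 1 * igCofactor j := by
  rw [← one_mul (1 : ℂ), ← monomial_mul, ← X_pow_eq_monomial, ← X_pow_eq_monomial, igFl,
    igCofactor]
  split_ifs with hj
  · simp [hj]
  · rfl

theorem degree_igFl_exponent {d j : ℕ} (hj : j ≤ d) :
    (Finsupp.single 1 (d - j) + Finsupp.single 0 j : Fin 2 →₀ ℕ).degree = d := by
  rw [map_add, Finsupp.degree_single, Finsupp.degree_single, Nat.sub_add_cancel hj]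

theorem igFl_mem_pow_idealOfVars {d j : ℕ} (hj : j ≤ d) :
    igFl d j ∈ idealOfVars (Fin 2) ℂ ^ d := by
  rw [igFl_eq_monomial_mul, pow_idealOfVars_eq_span]
  exact Ideal.mul_mem_right _ _ (Ideal.subset_span ⟨_, degree_igFl_exponent hj, rfl⟩)

theorem homogeneousComponent_igFl {d j : ℕ} (hj : j ≤ d) :
    homogeneousComponent d (igFl d j) =
      monomial (Finsupp.single 1 (d - j) + Finsupp.single 0 j) (constantCoeff (igCofactor j)) := by
  have h := homogeneousComponent_monomial_mul
    (Finsupp.single 1 (d - j) + Finsupp.single 0 j) (1 : ℂ) (igCofactor j)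
  rwa [degree_igFl_exponent hj, one_mul, ← igFl_eq_monomial_mul] at h

theorem coeff_single_one_igFl {d j : ℕ} (hj : j ≤ d) :
    coeff (Finsupp.single 1 d) (igFl d j) = if j = 0 then 1 else 0 := by
  rw [igFl_eq_monomial_mul,
    coeff_monomial_mul_of_degree_eq _ _ (by rw [degree_igFl_exponent hj, Finsupp.degree_single])]
  split_ifs with h hj0 hj0
  · simp [hj0, igCofactor]
  · exact absurd (by simpa using congr($h 0).symm) hj0
  · simp [hj0] at h
  · rfl

theorem igFl_multiplicity_at_origin_general (d : ℕ) :
    (∀ j : ℕ, j ≤ d → ∀ m ∈ (igFl d j).support, d ≤ totDeg m) ∧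
      (homogeneousComponent d (igFl d 0) = X 1 ^ d) ∧
      (∃ c : ℂ, c ≠ 0 ∧ homogeneousComponent d (igFl d d) = C c * X 0 ^ d) ∧
      (∀ a : Fin (d + 1) → ℂ, a 0 ≠ 0 → a (Fin.last d) ≠ 0 →
        (∀ m ∈ (∑ j : Fin (d + 1), C (a j) * igFl d j).support, d ≤ totDeg m) ∧
          (∃ m ∈ (∑ j : Fin (d + 1), C (a j) * igFl d j).support, totDeg m = d)) ∧
      ¬∃ l : MvPolynomial (Fin 2) ℂ, l.IsHomogeneous 1 ∧ l ≠ 0 ∧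
          ∀ j : ℕ, j ≤ d → l ∣ homogeneousComponent d (igFl d j) := by
  have h0 : homogeneousComponent d (igFl d 0) = X 1 ^ d := by
    simp [homogeneousComponent_igFl, igCofactor, X_pow_eq_monomial]
  set c := constantCoeff (igCofactor d)
  have hd : homogeneousComponent d (igFl d d) = C c * X 0 ^ d := by
    simp [homogeneousComponent_igFl, C_mul_X_pow_eq_monomial, c]
  refine ⟨fun j hj => (mem_pow_idealOfVars_iff d _).1 (igFl_mem_pow_idealOfVars hj), h0,
    ⟨c, constantCoeff_igCofactor_ne_zero d, hd⟩, fun a ha0 _ => ⟨?_, ?_⟩, ?_⟩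
  · exact (mem_pow_idealOfVars_iff d _).1 <|
      Ideal.sum_mem _ fun j _ => Ideal.mul_mem_left _ _ (igFl_mem_pow_idealOfVars j.is_le)
  · refine ⟨Finsupp.single 1 d, mem_support_iff.2 ?_, Finsupp.degree_single 1 d⟩
    simp [coeff_sum, coeff_single_one_igFl, Fin.sum_univ_succ, ha0]
  · rintro ⟨l, hl, hl0, hdvd⟩
    refine hl.not_isUnit one_ne_zero hl0 <|
      isUnit_of_dvd_X_pow_of_dvd_X_pow (i := 1) (j := 0) (n := d) (by decide)
        (h0 ▸ hdvd 0 d.zero_le) ?_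
    exact (IsUnit.dvd_mul_left ((constantCoeff_igCofactor_ne_zero d).isUnit.map C)).1
      (hd ▸ hdvd d le_rfl)

/-- Every monomial of `f_j` has total degree at least `d`; the degree-`d` parts of
`f₀` and `f_d` are `s^d` and `c μ^d` (with `c ≠ 0`) respectively. Hence a generic
linear combination `∑ a_j f_j` has a zero of multiplicity exactly `d` at the origin,
and there is no common tangent direction (no nonzero linear form dividing the
degree-`d` part of every `f_j`). -/
theorem igFl_multiplicity_at_origin (d : ℕ) (hd : 1 ≤ d) :
    (∀ j : ℕ, j ≤ d → ∀ m ∈ (igFl d j).support, d ≤ totDeg m) ∧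
      (homogeneousComponent d (igFl d 0) = X 1 ^ d) ∧
      (∃ c : ℂ, c ≠ 0 ∧ homogeneousComponent d (igFl d d) = C c * X 0 ^ d) ∧
      (∀ a : Fin (d + 1) → ℂ, a 0 ≠ 0 → a (Fin.last d) ≠ 0 →
        (∀ m ∈ (∑ j : Fin (d + 1), C (a j) * igFl d j).support, d ≤ totDeg m) ∧
          (∃ m ∈ (∑ j : Fin (d + 1), C (a j) * igFl d j).support, totDeg m = d)) ∧
      ¬∃ l : MvPolynomial (Fin 2) ℂ, l.IsHomogeneous 1 ∧ l ≠ 0 ∧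
          ∀ j : ℕ, j ≤ d → l ∣ homogeneousComponent d (igFl d j) :=
  igFl_multiplicity_at_origin_general d
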